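/- Let f : ℝ^(m×n) → ℝ be convex and differentiable, k ≥ 2, and L_k(M₁, …, M_k) = f(M_k ⋯ M₁) with M_i ∈ ℝ^(d_i×d_{i-1}), d_k = m, d₀ = n. Suppose d_j = min_{0≤i≤k} d_i for some 0 < j < k. If (M₁, …, M_k) is a local minimum of L_k, set A = M_k ⋯ M_{j+1} and B = M_j ⋯ M₁. Then the gradient of L₂(X,Y) = f(XY) vanishes at (A,B): f'(AB) Bᵀ = 0 and Aᵀ f'(AB) = 0. -/

import Mathlib

attribute [local instance] Matrix.frobeniusNormedAddCommGroup Matrix.frobeniusNormedSpace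

/-- Product `M (b-1) * ⋯ * M a` of a chain of matrices (identity when `b = a`,
junk value `0` when `b < a`). -/
def chainProd (d : ℕ → ℕ) (M : ∀ i : ℕ, Matrix (Fin (d (i + 1))) (Fin (d i)) ℝ)
    (a : ℕ) : (b : ℕ) → Matrix (Fin (d b)) (Fin (d a)) ℝ
  | 0 => if h : 0 = a then by rw [← h]; exact 1 else 0
  | (b + 1) => if h : b + 1 = a then by rw [← h]; exact 1
      else M b * chainProd d M a b

/-- Extend a `Fin k`-indexed tuple of layer matrices to an `ℕ`-indexed one (by `0`). -/
def ext (d : ℕ → ℕ) (k : ℕ)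
    (N : ∀ i : Fin k, Matrix (Fin (d (i.1 + 1))) (Fin (d i.1)) ℝ) :
    ∀ i : ℕ, Matrix (Fin (d (i + 1))) (Fin (d i)) ℝ :=
  fun i => if h : i < k then N ⟨i, h⟩ else 0

/-!
Write `G = f' (M_k ⋯ M_1)` and let `D_{a,b} = (M_k ⋯ M_{b+1})ᵀ G (M_a ⋯ M_1)ᵀ` be the gradient
of the loss with respect to the block product `M_b ⋯ M_{a+1}`; the claim is `D_{j,k} = 0` and
`D_{0,j} = 0`. First-order optimality in a single layer gives `D_{i-1,i} = 0`, and the block is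
then widened one layer at a time, at all local minima simultaneously. To pass from `D_{j,p}` to
`D_{j,p+1}`, let `C = M_p ⋯ M_{j+1}`. On the one hand `D_{j,p+1} Cᵀ = D_{p,p+1} = 0`. On the
other hand, moving `M_{p+1}` along any `E` with `E C = 0` leaves the end-to-end product, hence
the loss, unchanged, so nearby points on that line are local minima too, and `D_{j,p} = 0` there
gives `Eᵀ D_{j,p+1} = 0`. Since `d_j ≤ d_p`, either `C` is injective or it has a nonzero left
kernel vector, and either way these two facts force `D_{j,p+1} = 0`. Below the bottleneck the
argument is the mirror image.
-/

open Filter Topology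
open scoped Matrix

namespace Matrix

variable {K a m n : Type*} [Field K] [Fintype a] [Fintype m] [Fintype n]

theorem mulVec_injective_of_vecMul_injective (hnm : Fintype.card n ≤ Fintype.card m)
    {C : Matrix m n K} (hC : Function.Injective C.vecMul) : Function.Injective C.mulVec := by
  have hrank : C.rank = Fintype.card m := (vecMul_injective_iff.1 hC).rank_matrix
  have := C.rank_le_card_width
  rw [mulVec_injective_iff, linearIndependent_iff_card_eq_finrank_span]
  exact (by omega : Fintype.card n = C.rank).trans C.rank_eq_finrank_span_cols

theorem eq_zero_of_mul_transpose_eq_zero_of_forall (hnm : Fintype.card n ≤ Fintype.card m)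
    {S : Matrix a n K} {C : Matrix m n K} (hSC : S * Cᵀ = 0)
    (hE : ∀ E : Matrix a m K, E * C = 0 → Eᵀ * S = 0) : S = 0 := by
  by_cases hC : Function.Injective C.vecMul
  · cases isEmpty_or_nonempty a
    · exact Subsingleton.elim _ _
    have hCS : C * Sᵀ = C * (0 : Matrix n a K) := by
      rw [← transpose_transpose C, ← transpose_mul, hSC]; simp
    exact transpose_eq_zero.1 <| mul_right_injective_iff_mulVec_injective.2
      (mulVec_injective_of_vecMul_injective hnm hC) hCS
  · obtain ⟨u, huC, hu⟩ : ∃ u : m → K, u ᵥ* C = 0 ∧ u ≠ 0 := by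
      simpa using (injective_iff_map_eq_zero C.vecMulLinear).not.1 hC
    obtain ⟨i, hi : u i ≠ 0⟩ := Function.ne_iff.1 hu
    refine ext_iff_vecMul.2 fun v => funext fun j => ?_
    have h := hE (vecMulVec v u) (by rw [vecMulVec_mul, huC]; ext; simp [vecMulVec_apply])
    rw [transpose_vecMulVec, vecMulVec_mul] at h
    simpa [vecMulVec_apply, hi] using congrFun₂ h i j

theorem eq_zero_of_transpose_mul_eq_zero_of_forall (hnm : Fintype.card n ≤ Fintype.card m)
    {S : Matrix n a K} {C : Matrix n m K} (hCS : Cᵀ * S = 0)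
    (hE : ∀ E : Matrix m a K, C * E = 0 → S * Eᵀ = 0) : S = 0 := by
  refine transpose_eq_zero.1 <| eq_zero_of_mul_transpose_eq_zero_of_forall hnm
    (C := Cᵀ) (by simpa using congrArg transpose hCS) fun E hEC => ?_
  simpa using congrArg transpose (hE Eᵀ (by simpa using congrArg transpose hEC))

theorem transpose_mul_mul_transpose_eq_zero {l o R : Type*} [Fintype l] [Fintype o] [CommRing R]
    {G : Matrix l o R} {T : Matrix l m R} {B : Matrix n o R}
    (h : ∀ E : Matrix m n R, (Gᵀ * (T * (E * B))).trace = 0) : Tᵀ * G * Bᵀ = 0 := by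
  refine ext_iff_trace_mul_right.2 fun X => ?_
  rw [Matrix.zero_mul, trace_zero, ← h Xᵀ, ← trace_transpose]
  simp only [transpose_mul, transpose_transpose, Matrix.mul_assoc]
  rw [← Matrix.mul_assoc, trace_mul_comm, Matrix.mul_assoc]

end Matrix

theorem IsLocalMin.eventually_isLocalMin_of_eq {X β : Type*} [TopologicalSpace X] [Preorder β]
    {L : X → β} {x : X} (h : IsLocalMin L x) : ∀ᶠ y in 𝓝 x, L y = L x → IsLocalMin L y :=
  h.eventually_nhds.mono fun _ hy hLy => hy.mono fun _ hz => hLy ▸ hz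

theorem tendsto_update_add_smul {ι : Type*} [DecidableEq ι] {β : ι → Type*}
    [∀ i, AddCommMonoid (β i)] [∀ i, Module ℝ (β i)] [∀ i, TopologicalSpace (β i)]
    [∀ i, ContinuousAdd (β i)] [∀ i, ContinuousSMul ℝ (β i)] (x : ∀ i, β i) (i : ι) (v : β i) :
    Tendsto (fun t : ℝ => Function.update x i (x i + t • v)) (𝓝 0) (𝓝 x) := by
  have hcont : Continuous fun t : ℝ => Function.update x i (x i + t • v) := by fun_prop
  simpa using hcont.tendsto 0

theorem IsLocalMin.comp_update_add_smul {ι γ : Type*} [DecidableEq ι] {β : ι → Type*}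
    [∀ i, AddCommMonoid (β i)] [∀ i, Module ℝ (β i)] [∀ i, TopologicalSpace (β i)]
    [∀ i, ContinuousAdd (β i)] [∀ i, ContinuousSMul ℝ (β i)] [Preorder γ] {L : (∀ i, β i) → γ}
    {x : ∀ i, β i} (h : IsLocalMin L x) (i : ι) (v : β i) :
    IsLocalMin (fun t : ℝ => L (Function.update x i (x i + t • v))) 0 :=
  IsMinFilter.comp_tendsto (g := fun t : ℝ => Function.update x i (x i + t • v))
    (by simp only [zero_smul, add_zero, Function.update_eq_self]; exact h)
    (tendsto_update_add_smul x i v)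

theorem eq_zero_of_eventually_smul_eq_zero {V : Type*} [AddCommGroup V] [Module ℝ V] {v : V}
    (h : ∀ᶠ t in 𝓝 (0 : ℝ), t • v = 0) : v = 0 := by
  obtain ⟨t, htv, ht⟩ := ((h.filter_mono nhdsWithin_le_nhds).and
    (self_mem_nhdsWithin : {t : ℝ | t ≠ 0} ∈ 𝓝[≠] 0)).exists
  exact (smul_eq_zero.1 htv).resolve_left ht

section ChainProd

variable {d : ℕ → ℕ} {M M' : ∀ i : ℕ, Matrix (Fin (d (i + 1))) (Fin (d i)) ℝ}

theorem chainProd_self (a : ℕ) : chainProd d M a a = 1 := by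
  cases a <;> simp [chainProd]

theorem chainProd_succ {a b : ℕ} (h : a ≤ b) :
    chainProd d M a (b + 1) = M b * chainProd d M a b := by
  simp [chainProd, show b + 1 ≠ a by omega]

theorem chainProd_of_lt {a b : ℕ} (h : b < a) : chainProd d M a b = 0 := by
  induction b with
  | zero => simp [chainProd, h.ne]
  | succ b ih => simp [chainProd, show b + 1 ≠ a by omega, ih (by omega)]

theorem chainProd_mul_chainProd {a b c : ℕ} (hab : a ≤ b) (hbc : b ≤ c) :
    chainProd d M b c * chainProd d M a b = chainProd d M a c := by
  induction c, hbc using Nat.le_induction with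
  | base => rw [chainProd_self, Matrix.one_mul]
  | succ c hbc ih =>
    rw [chainProd_succ (hab.trans hbc), chainProd_succ hbc, ← ih, Matrix.mul_assoc]

theorem chainProd_congr {a b : ℕ} (h : ∀ i, a ≤ i → i < b → M i = M' i) :
    chainProd d M a b = chainProd d M' a b := by
  induction b with
  | zero => rfl
  | succ b ih =>
    rcases lt_trichotomy a (b + 1) with hab | rfl | hab
    · rw [chainProd_succ (by omega), chainProd_succ (by omega), h b (by omega) (by omega),
        ih fun i h₁ h₂ => h i h₁ (by omega)]
    · rw [chainProd_self, chainProd_self]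
    · rw [chainProd_of_lt hab, chainProd_of_lt hab]

end ChainProd

section Network

variable {d : ℕ → ℕ} {k : ℕ} {N : ∀ i : Fin k, Matrix (Fin (d (i.1 + 1))) (Fin (d i.1)) ℝ}

theorem ext_of_lt {i : ℕ} (hik : i < k) : ext d k N i = N ⟨i, hik⟩ :=
  dif_pos hik

theorem ext_update_of_ne {i : ℕ} (hik : i < k) (X) {l : ℕ} (hl : l ≠ i) :
    ext d k (Function.update N ⟨i, hik⟩ X) l = ext d k N l := by
  unfold ext
  split_ifs with hlk
  · exact Function.update_of_ne (by simpa [Fin.ext_iff] using hl) _ _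
  · rfl

theorem ext_update_self {i : ℕ} (hik : i < k) (X) :
    ext d k (Function.update N ⟨i, hik⟩ X) i = X := by
  rw [ext_of_lt hik, Function.update_self]

theorem chainProd_ext_update_of_notMem {i : ℕ} (hik : i < k) (X) {a b : ℕ}
    (hi : b ≤ i ∨ i < a) :
    chainProd d (ext d k (Function.update N ⟨i, hik⟩ X)) a b = chainProd d (ext d k N) a b :=
  chainProd_congr fun _ h₁ h₂ => ext_update_of_ne hik X (by omega)

theorem chainProd_ext_update {i : ℕ} (hik : i < k) (X) {a b : ℕ} (hai : a ≤ i) (hib : i < b) :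
    chainProd d (ext d k (Function.update N ⟨i, hik⟩ X)) a b =
      chainProd d (ext d k N) (i + 1) b * (X * chainProd d (ext d k N) a i) := by
  rw [← chainProd_mul_chainProd (b := i + 1) (by omega) hib, chainProd_succ hai,
    ext_update_self, chainProd_ext_update_of_notMem hik X (by omega),
    chainProd_ext_update_of_notMem hik X (by omega)]

theorem chainProd_ext_update_add_smul {i : ℕ} (hik : i < k) (E) (t : ℝ) {a b : ℕ}
    (hai : a ≤ i) (hib : i < b) :
    chainProd d (ext d k (Function.update N ⟨i, hik⟩ (N ⟨i, hik⟩ + t • E))) a b =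
      chainProd d (ext d k N) a b +
        t • (chainProd d (ext d k N) (i + 1) b * (E * chainProd d (ext d k N) a i)) := by
  rw [chainProd_ext_update hik _ hai hib, Matrix.add_mul, Matrix.mul_add, Matrix.smul_mul,
    Matrix.mul_smul, ← ext_of_lt (N := N) hik, ← chainProd_succ hai,
    chainProd_mul_chainProd (by omega) hib]

/-- `D_{a,b}`: the gradient of the loss with respect to the product
`chainProd d (ext d k N) a b` of the layers `N a, …, N (b - 1)`. -/
def blockGradient (f' : Matrix (Fin (d k)) (Fin (d 0)) ℝ → Matrix (Fin (d k)) (Fin (d 0)) ℝ)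
    (N : ∀ i : Fin k, Matrix (Fin (d (i.1 + 1))) (Fin (d i.1)) ℝ) (a b : ℕ) :
    Matrix (Fin (d b)) (Fin (d a)) ℝ :=
  (chainProd d (ext d k N) b k)ᵀ * f' (chainProd d (ext d k N) 0 k) *
    (chainProd d (ext d k N) 0 a)ᵀ

variable {f : Matrix (Fin (d k)) (Fin (d 0)) ℝ → ℝ}
  {f' : Matrix (Fin (d k)) (Fin (d 0)) ℝ → Matrix (Fin (d k)) (Fin (d 0)) ℝ}

theorem blockGradient_update_add_smul_right {a b : ℕ} (hbk : b < k) (hab : a ≤ b) (E) (t : ℝ)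
    (hE : chainProd d (ext d k N) (b + 1) k * (E * chainProd d (ext d k N) 0 b) = 0) :
    blockGradient f' (Function.update N ⟨b, hbk⟩ (N ⟨b, hbk⟩ + t • E)) a b =
      blockGradient f' N a b + t • (Eᵀ * blockGradient f' N a (b + 1)) := by
  simp only [blockGradient, chainProd_ext_update_add_smul hbk E t le_rfl hbk,
    chainProd_ext_update_add_smul hbk E t (Nat.zero_le b) hbk, hE, smul_zero, add_zero,
    chainProd_ext_update_of_notMem hbk _ (Or.inl hab), chainProd_self, Matrix.mul_one,
    Matrix.transpose_add, Matrix.transpose_smul, Matrix.transpose_mul, Matrix.add_mul,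
    Matrix.smul_mul, Matrix.mul_assoc]

theorem blockGradient_update_add_smul_left {s b : ℕ} (hsk : s < k) (hsb : s < b) (E) (t : ℝ)
    (hE : chainProd d (ext d k N) (s + 1) k * (E * chainProd d (ext d k N) 0 s) = 0) :
    blockGradient f' (Function.update N ⟨s, hsk⟩ (N ⟨s, hsk⟩ + t • E)) (s + 1) b =
      blockGradient f' N (s + 1) b + t • (blockGradient f' N s b * Eᵀ) := by
  simp only [blockGradient, chainProd_ext_update_add_smul hsk E t (Nat.zero_le s) hsk,
    chainProd_ext_update_add_smul hsk E t (Nat.zero_le s) (Nat.lt_succ_self s), hE, smul_zero,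
    add_zero, chainProd_ext_update_of_notMem hsk _ (Or.inr hsb), chainProd_self, Matrix.one_mul,
    Matrix.transpose_add, Matrix.transpose_smul, Matrix.transpose_mul, Matrix.mul_add,
    Matrix.mul_smul, Matrix.mul_assoc]

theorem IsLocalMin.blockGradient_succ_eq_zero (hdiff : Differentiable ℝ f)
    (hf' : ∀ M H, fderiv ℝ f M H = ((f' M)ᵀ * H).trace)
    (hloc : IsLocalMin (fun N => f (chainProd d (ext d k N) 0 k)) N) {i : ℕ} (hik : i < k) :
    blockGradient f' N i (i + 1) = 0 := by
  refine Matrix.transpose_mul_mul_transpose_eq_zero fun E => ?_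
  set P := chainProd d (ext d k N) 0 k
  set Q := chainProd d (ext d k N) (i + 1) k * (E * chainProd d (ext d k N) 0 i)
  have hline : IsLocalMin (fun t : ℝ => f (P + t • Q)) 0 := by
    simpa only [chainProd_ext_update_add_smul hik E _ (Nat.zero_le i) hik]
      using hloc.comp_update_add_smul ⟨i, hik⟩ E
  rw [← hf']
  exact hline.hasDerivAt_eq_zero ((hdiff P).hasFDerivAt.hasLineDerivAt Q)

theorem IsLocalMin.eventually_isLocalMin_update
    (hloc : IsLocalMin (fun N => f (chainProd d (ext d k N) 0 k)) N) {i : ℕ} (hik : i < k) {E}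
    (hE : chainProd d (ext d k N) (i + 1) k * (E * chainProd d (ext d k N) 0 i) = 0) :
    ∀ᶠ t in 𝓝 (0 : ℝ), IsLocalMin (fun N => f (chainProd d (ext d k N) 0 k))
      (Function.update N ⟨i, hik⟩ (N ⟨i, hik⟩ + t • E)) := by
  filter_upwards [(tendsto_update_add_smul N ⟨i, hik⟩ E).eventually
    hloc.eventually_isLocalMin_of_eq] with t ht
  refine ht (congrArg f ?_)
  rw [chainProd_ext_update_add_smul hik E t (Nat.zero_le i) hik, hE, smul_zero, add_zero]

theorem IsLocalMin.blockGradient_from_bottleneck_eq_zero (hdiff : Differentiable ℝ f)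
    (hf' : ∀ M H, fderiv ℝ f M H = ((f' M)ᵀ * H).trace) {j : ℕ} (hmin : ∀ i ≤ k, d j ≤ d i)
    {p : ℕ} (hjp : j < p) (hpk : p ≤ k)
    (hloc : IsLocalMin (fun N => f (chainProd d (ext d k N) 0 k)) N) :
    blockGradient f' N j p = 0 := by
  induction p, hjp using Nat.le_induction generalizing N with
  | base => exact hloc.blockGradient_succ_eq_zero hdiff hf' hpk
  | succ p hjp ih =>
    have hp : p < k := hpk
    have hjp : j ≤ p := by omega
    have hC := chainProd_mul_chainProd (M := ext d k N) (Nat.zero_le j) hjp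
    refine Matrix.eq_zero_of_mul_transpose_eq_zero_of_forall
      (C := chainProd d (ext d k N) j p) (by simpa using hmin p hp.le) ?_ fun E hEC => ?_
    · have hfoc := hloc.blockGradient_succ_eq_zero hdiff hf' hp
      rwa [blockGradient, ← hC, Matrix.transpose_mul, ← Matrix.mul_assoc] at hfoc
    · have hE : chainProd d (ext d k N) (p + 1) k * (E * chainProd d (ext d k N) 0 p) = 0 := by
        rw [← hC, ← Matrix.mul_assoc E, hEC, Matrix.zero_mul, Matrix.mul_zero]
      refine eq_zero_of_eventually_smul_eq_zero ?_
      filter_upwards [hloc.eventually_isLocalMin_update hp hE] with t ht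
      simpa [blockGradient_update_add_smul_right hp hjp E t hE, ih hp.le hloc]
        using ih hp.le ht

theorem IsLocalMin.blockGradient_to_bottleneck_eq_zero (hdiff : Differentiable ℝ f)
    (hf' : ∀ M H, fderiv ℝ f M H = ((f' M)ᵀ * H).trace) {j : ℕ} (hjk : j < k)
    (hmin : ∀ i ≤ k, d j ≤ d i) {s : ℕ} (hsj : s < j)
    (hloc : IsLocalMin (fun N => f (chainProd d (ext d k N) 0 k)) N) :
    blockGradient f' N s j = 0 := by
  refine Nat.decreasingInduction' (n := j - 1) (P := fun s => ∀ N, IsLocalMin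
    (fun N => f (chainProd d (ext d k N) 0 k)) N → blockGradient f' N s j = 0)
    ?_ (by omega) ?_ N hloc
  · intro s hs _ ih N hloc
    have hsk : s < k := by omega
    have hC := chainProd_mul_chainProd (M := ext d k N) (a := s + 1) (by omega) hjk.le
    refine Matrix.eq_zero_of_transpose_mul_eq_zero_of_forall
      (C := chainProd d (ext d k N) (s + 1) j) (by simpa using hmin (s + 1) (by omega)) ?_
      fun E hCE => ?_
    · have hfoc := hloc.blockGradient_succ_eq_zero hdiff hf' hsk
      rw [blockGradient, ← hC, Matrix.transpose_mul] at hfoc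
      simpa only [blockGradient, Matrix.mul_assoc] using hfoc
    · have hE : chainProd d (ext d k N) (s + 1) k * (E * chainProd d (ext d k N) 0 s) = 0 := by
        rw [← hC, Matrix.mul_assoc, ← Matrix.mul_assoc _ E, hCE, Matrix.zero_mul,
          Matrix.mul_zero]
      refine eq_zero_of_eventually_smul_eq_zero ?_
      filter_upwards [hloc.eventually_isLocalMin_update hsk hE] with t ht
      simpa [blockGradient_update_add_smul_left (b := j) hsk (by omega) E t hE, ih N hloc]
        using ih _ ht
  · intro N hloc
    have hfoc := hloc.blockGradient_succ_eq_zero hdiff hf' (i := j - 1) (by omega)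
    rwa [Nat.sub_add_cancel (by omega : 1 ≤ j)] at hfoc

end Network

open Matrix in
theorem stmt_9_general (d : ℕ → ℕ) (k : ℕ)
    (f : Matrix (Fin (d k)) (Fin (d 0)) ℝ → ℝ)
    (hdiff : Differentiable ℝ f)
    (f' : Matrix (Fin (d k)) (Fin (d 0)) ℝ → Matrix (Fin (d k)) (Fin (d 0)) ℝ)
    (hf' : ∀ M H, fderiv ℝ f M H = ((f' M)ᵀ * H).trace)
    (j : ℕ) (hj0 : 0 < j) (hjk : j < k) (hmin : ∀ i ≤ k, d j ≤ d i)
    (M : ∀ i : Fin k, Matrix (Fin (d (i.1 + 1))) (Fin (d i.1)) ℝ)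
    (hloc : IsLocalMin (fun N => f (chainProd d (ext d k N) 0 k)) M) :
    f' (chainProd d (ext d k M) j k * chainProd d (ext d k M) 0 j) *
        (chainProd d (ext d k M) 0 j)ᵀ = 0 ∧
      (chainProd d (ext d k M) j k)ᵀ *
        f' (chainProd d (ext d k M) j k * chainProd d (ext d k M) 0 j) = 0 := by
  have hsplit := chainProd_mul_chainProd (M := ext d k M) (Nat.zero_le j) hjk.le
  have hA := hloc.blockGradient_from_bottleneck_eq_zero hdiff hf' hmin hjk le_rfl
  have hB := hloc.blockGradient_to_bottleneck_eq_zero hdiff hf' hjk hmin hj0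
  simp only [blockGradient, chainProd_self, transpose_one, Matrix.one_mul, Matrix.mul_one,
    ← hsplit] at hA hB
  exact ⟨hA, hB⟩

open Matrix in
/-- at a local minimum of `L_k` with a strict interior bottleneck at
layer `j`, the gradient of `L₂(X, Y) = f (X Y)` vanishes at
`(A, B) = (M_k ⋯ M_{j+1}, M_j ⋯ M_1)`: `f'(AB) Bᵀ = 0` and `Aᵀ f'(AB) = 0`. -/
theorem stmt_9 (d : ℕ → ℕ) (k : ℕ) (hk : 2 ≤ k)
    (f : Matrix (Fin (d k)) (Fin (d 0)) ℝ → ℝ)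
    (hconv : ConvexOn ℝ Set.univ f) (hdiff : Differentiable ℝ f)
    (f' : Matrix (Fin (d k)) (Fin (d 0)) ℝ → Matrix (Fin (d k)) (Fin (d 0)) ℝ)
    (hf' : ∀ M H, fderiv ℝ f M H = ((f' M)ᵀ * H).trace)
    (j : ℕ) (hj0 : 0 < j) (hjk : j < k) (hmin : ∀ i ≤ k, d j ≤ d i)
    (M : ∀ i : Fin k, Matrix (Fin (d (i.1 + 1))) (Fin (d i.1)) ℝ)
    (hloc : IsLocalMin (fun N => f (chainProd d (ext d k N) 0 k)) M) :
    f' (chainProd d (ext d k M) j k * chainProd d (ext d k M) 0 j) *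
        (chainProd d (ext d k M) 0 j)ᵀ = 0 ∧
      (chainProd d (ext d k M) j k)ᵀ *
        f' (chainProd d (ext d k M) j k * chainProd d (ext d k M) 0 j) = 0 :=
  stmt_9_general d k f hdiff f' hf' j hj0 hjk hmin M hloc
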